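/- arXiv:1709.04233 — 3 statements merged into one kernel-verified Lean document; each statement's English description precedes it below -/
import Mathlib

section
/- For any function f : ℝⁿ → ℝ it holds that Lip(f) = sup_{x∈ℝⁿ} Lip_x(f), where the equality is understood in [0,∞]. -/
open MeasureTheory Metric Set Filter
open scoped RealInnerProductSpace ENNReal NNReal Topology

noncomputable section

/-- Euclidean space ℝⁿ. -/
abbrev En (n : ℕ) := EuclideanSpace ℝ (Fin n)

/-- The cone `C_{e,α} = {x : ⟨x,e⟩ ≥ α‖x‖‖e‖}`. -/
def cone {n : ℕ} (e : En n) (α : ℝ) : Set (En n) :=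
  {x | α * ‖x‖ * ‖e‖ ≤ (inner ℝ x e : ℝ)}

/-- A Lipschitz curve whose derivative lies a.e. in the cone `C_{e,α}`. -/
def IsConeCurve {n : ℕ} (e : En n) (α : ℝ) (γ : ℝ → En n) : Prop :=
  (∃ K : ℝ≥0, LipschitzWith K γ) ∧ ∀ᵐ t ∂(volume : Measure ℝ), deriv γ t ∈ cone e α

open scoped Classical in
/-- The `(e,α)`-width of an open set. -/
noncomputable def widthOpen {n : ℕ} (e : En n) (α : ℝ) (G : Set (En n)) : ℝ≥0∞ :=
  if e = 0 ∨ 1 < α then 0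
  else ⨆ γ : {γ : ℝ → En n // IsConeCurve e α γ}, μH[1] (G ∩ Set.range γ.1)

/-- The `(e,α)`-width of an arbitrary set. -/
noncomputable def width {n : ℕ} (e : En n) (α : ℝ) (E : Set (En n)) : ℝ≥0∞ :=
  ⨅ (G : Set (En n)) (_ : IsOpen G) (_ : E ⊆ G), widthOpen e α G

/-- The set `𝒩(E,x)`. -/
def NormalSet {n : ℕ} (E : Set (En n)) (x : En n) : Set (En n) :=
  {e | ∀ ε > 0, ∃ r > 0, width e ε (ball x r ∩ E) = 0}

/-- Cone unrectifiable sets. -/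
def ConeUnrectifiable {n : ℕ} (E : Set (En n)) : Prop :=
  ∀ x ∈ E, NormalSet E x ≠ {0}

/-- Uniformly purely unrectifiable sets. -/
def UniformlyPurelyUnrectifiable {n : ℕ} (E : Set (En n)) : Prop :=
  ∀ x ∈ E, NormalSet E x = Set.univ

/-- Upper directional derivative `D⁺f(x;y)`. -/
noncomputable def Dupper {n : ℕ} (f : En n → ℝ) (x y : En n) : ℝ :=
  limsup (fun t : ℝ => (f (x + t • y) - f x) / t) (𝓝[>] (0:ℝ))

/-- Lower directional derivative `D₊f(x;y)`. -/
noncomputable def Dlower {n : ℕ} (f : En n → ℝ) (x y : En n) : ℝ :=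
  liminf (fun t : ℝ => (f (x + t • y) - f x) / t) (𝓝[>] (0:ℝ))

/-- `f ∈ C¹(H)`: differentiable on `H` with continuous gradient. -/
def C1On {n : ℕ} (f : En n → ℝ) (H : Set (En n)) : Prop :=
  (∀ x ∈ H, DifferentiableAt ℝ f x) ∧ ContinuousOn (fun x => gradient f x) H

/-- The (possibly infinite) Lipschitz constant of `f`. -/
noncomputable def lipConst {n : ℕ} (f : En n → ℝ) : ℝ≥0∞ :=
  sInf {L : ℝ≥0∞ | ∀ x y : En n, ENNReal.ofReal |f y - f x| ≤ L * edist y x}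

/-- The pointwise Lipschitz constant of `f` at `x`. -/
noncomputable def lipAt {n : ℕ} (f : En n → ℝ) (x : En n) : ℝ≥0∞ :=
  limsup (fun y => ENNReal.ofReal |f y - f x| / edist y x) (𝓝[≠] x)

/-- An `F_σ` set: a countable union of closed sets. -/
def IsFsigma {n : ℕ} (S : Set (En n)) : Prop :=
  ∃ F : ℕ → Set (En n), (∀ i, IsClosed (F i)) ∧ S = ⋃ i, F i

/-! Each pointwise constant `Lip_x f` is bounded by any global Lipschitz constant. Conversely, if
`Lip_x f < c` everywhere, then `f` is `c`-Lipschitz on a neighbourhood of every point, and a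
real-induction (supremum) argument along each segment `[x, y]` turns this local bound into
`|f y - f x| ≤ c ‖y - x‖`. -/

lemma dist_le_mul_sub_of_forall_eventually_dist_le {F : Type*} [PseudoMetricSpace F]
    {φ : ℝ → F} {r : ℝ} (hφ : ∀ t, ∀ᶠ s in 𝓝 t, dist (φ s) (φ t) ≤ r * dist s t)
    {a b : ℝ} (hab : a ≤ b) : dist (φ b) (φ a) ≤ r * (b - a) := by
  have hcont : Continuous φ := continuous_iff_continuousAt.2 fun t => by
    obtain ⟨δ, hδ, ht⟩ := Metric.eventually_nhds_iff.1 (hφ t)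
    exact continuousAt_of_locally_lipschitz hδ r fun s hs => ht hs
  let S := {t | dist (φ t) (φ a) ≤ r * (t - a)}
  have hS : IsClosed (S ∩ Icc a b) :=
    (isClosed_le (hcont.dist continuous_const) (continuous_const.mul
      (continuous_id.sub continuous_const))).inter isClosed_Icc
  have ha : a ∈ S := by simp [S]
  refine hS.Icc_subset_of_forall_mem_nhdsWithin ha (fun x ⟨hx, _⟩ => ?_) ⟨hab, le_rfl⟩
  filter_upwards [nhdsWithin_le_nhds (hφ x), self_mem_nhdsWithin] with t ht (hxt : x < t)
  calc dist (φ t) (φ a) ≤ dist (φ t) (φ x) + dist (φ x) (φ a) := dist_triangle _ _ _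
    _ ≤ r * (t - x) + r * (x - a) := by
        rw [Real.dist_eq, abs_of_pos (sub_pos.2 hxt)] at ht
        exact add_le_add ht hx
    _ = r * (t - a) := by ring

lemma LipschitzWith.of_forall_eventually_dist_le {E F : Type*} [SeminormedAddCommGroup E]
    [NormedSpace ℝ E] [PseudoMetricSpace F] {g : E → F} {K : ℝ≥0}
    (hg : ∀ z, ∀ᶠ w in 𝓝 z, dist (g w) (g z) ≤ K * dist w z) : LipschitzWith K g := by
  refine LipschitzWith.of_dist_le_mul fun y x => ?_
  let γ : ℝ → E := AffineMap.lineMap x y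
  have hγ : ∀ s t, dist (γ s) (γ t) = dist s t * dist x y := fun s t => dist_lineMap_lineMap x y s t
  have hφ : ∀ t, ∀ᶠ s in 𝓝 t, dist (g (γ s)) (g (γ t)) ≤ (K * dist x y) * dist s t := by
    intro t
    have hγc : Continuous γ := AffineMap.lineMap_continuous
    filter_upwards [hγc.continuousAt.eventually (hg (γ t))] with s hs
    rwa [hγ, ← mul_assoc, mul_right_comm] at hs
  simpa [γ, dist_comm x y] using dist_le_mul_sub_of_forall_eventually_dist_le hφ zero_le_one

lemma lipAt_le_lipConst {n : ℕ} (f : En n → ℝ) (x : En n) : lipAt f x ≤ lipConst f :=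
  le_sInf fun L hL => limsup_le_of_le (by isBoundedDefault) <|
    Eventually.of_forall fun y => ENNReal.div_le_of_le_mul (hL x y)

lemma lipConst_le_of_lipschitzWith {n : ℕ} {f : En n → ℝ} {K : ℝ≥0} (hf : LipschitzWith K f) :
    lipConst f ≤ K :=
  sInf_le fun x y => by simpa only [edist_dist, Real.dist_eq] using hf y x

lemma eventually_dist_le_of_lipAt_lt {n : ℕ} {f : En n → ℝ} {x : En n} {K : ℝ≥0}
    (h : lipAt f x < K) : ∀ᶠ y in 𝓝 x, dist (f y) (f x) ≤ K * dist y x := by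
  filter_upwards [eventually_nhdsWithin_iff.1 (eventually_lt_of_limsup_lt h)] with y hy
  rcases eq_or_ne y x with rfl | hyx
  · simp
  have hlt := (ENNReal.div_lt_iff (Or.inl (edist_pos.2 hyx).ne') (Or.inl (edist_ne_top y x))).1
    (hy hyx)
  rw [← Real.dist_eq, edist_dist, ← ENNReal.ofReal_coe_nnreal,
    ← ENNReal.ofReal_mul K.coe_nonneg] at hlt
  exact (ENNReal.ofReal_lt_ofReal_iff'.1 hlt).1.le

theorem statement8 (n : ℕ) (f : En n → ℝ) :
    lipConst f = ⨆ x : En n, lipAt f x := by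
  refine le_antisymm (le_of_forall_gt_imp_ge_of_dense fun c hc => ?_)
    (iSup_le (lipAt_le_lipConst f))
  induction c using ENNReal.recTopCoe with
  | top => exact le_top
  | coe c =>
    refine lipConst_le_of_lipschitzWith (LipschitzWith.of_forall_eventually_dist_le fun x => ?_)
    exact eventually_dist_le_of_lipAt_lt ((le_iSup _ x).trans_lt hc)

end
end

section
/- Suppose H ⊆ ℝⁿ is open, g : ℝⁿ → ℝ belongs to C¹(H), ω : ℝⁿ → [0,∞) is continuous and strictly positive on H, and η ∈ (0,1]. Then there is a function ξ : ℝⁿ → [0,∞) such that: (1) ξ is continuous on ℝⁿ, strictly positive on H, and ξ ≤ ω/2; (2) if x ∈ H and h : ℝⁿ → ℝ satisfies |h − g| ≤ 2ξ everywhere, then there is 0 < r < ω(x) such that |h(x+y) − h(x) − ⟨g'(x), y⟩| ≤ ηr whenever ‖y‖ ≤ r. -/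
open MeasureTheory Metric Set Filter
open scoped RealInnerProductSpace ENNReal NNReal Topology

noncomputable section

/-!
Call `s` an admissible scale at `x` if on the ball of radius `32 s / η` around `x` we stay in `H`
and the gradient of `g` moves by at most `η / 4`, and if `32 s ≤ η ω(x)`. Continuity of `∇g` and
of `ω` give a positive admissible scale that is locally uniform on `H`. Taking the supremum of
admissible scales and then its Pasch–Hausdorff envelope with slope `η / 8` produces a continuous
`ξ`, positive on `H`, with every `s < ξ x` admissible at `x`. For `x ∈ H` take `r = 8 ξ(x) / η`:
the mean value inequality bounds the linearization error of `g` on `B(x, r)` by `η r / 4`, and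
replacing `g` by `h` costs `2 ξ(x) + 2 ξ(x + y) ≤ 4 ξ(x) + η r / 4 = 3 η r / 4`.
-/

section LipschitzEnvelope

variable {X : Type*} [PseudoMetricSpace X]

/-- The Pasch–Hausdorff envelope: the largest `K`-Lipschitz function below `u`. -/
def lipschitzEnvelope (K : ℝ≥0) (u : X → ℝ) (x : X) : ℝ :=
  ⨅ y, (u y + K * dist x y)

variable {K : ℝ≥0} {u : X → ℝ}

lemma bddBelow_range_add_mul_dist (hu : ∀ x, 0 ≤ u x) (x : X) :
    BddBelow (range fun y => u y + K * dist x y) :=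
  ⟨0, by rintro _ ⟨y, rfl⟩; exact add_nonneg (hu y) (by positivity)⟩

lemma lipschitzEnvelope_nonneg (hu : ∀ x, 0 ≤ u x) (x : X) : 0 ≤ lipschitzEnvelope K u x :=
  Real.iInf_nonneg fun y => add_nonneg (hu y) (by positivity)

lemma lipschitzEnvelope_le (hu : ∀ x, 0 ≤ u x) (x : X) : lipschitzEnvelope K u x ≤ u x := by
  simpa [lipschitzEnvelope] using ciInf_le (bddBelow_range_add_mul_dist (K := K) hu x) x

lemma lipschitzEnvelope_le_add (hu : ∀ x, 0 ≤ u x) (x x' : X) :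
    lipschitzEnvelope K u x ≤ lipschitzEnvelope K u x' + K * dist x x' := by
  have : Nonempty X := ⟨x⟩
  rw [← sub_le_iff_le_add]
  refine le_ciInf fun y => ?_
  have h₁ := ciInf_le (bddBelow_range_add_mul_dist (K := K) hu x) y
  have h₂ := mul_le_mul_of_nonneg_left (dist_triangle x x' y) K.coe_nonneg
  simp only [lipschitzEnvelope] at h₁ ⊢
  linarith

lemma lipschitzWith_lipschitzEnvelope (hu : ∀ x, 0 ≤ u x) :
    LipschitzWith K (lipschitzEnvelope K u) :=
  LipschitzWith.of_le_add_mul K fun x x' => lipschitzEnvelope_le_add hu x x'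

lemma lipschitzEnvelope_pos (hK : 0 < K) (hu : ∀ x, 0 ≤ u x) {x : X} {c : ℝ} (hc : 0 < c)
    (hcu : ∀ᶠ y in 𝓝 x, c ≤ u y) : 0 < lipschitzEnvelope K u x := by
  have : Nonempty X := ⟨x⟩
  obtain ⟨δ, hδ, hball⟩ := Metric.eventually_nhds_iff_ball.1 hcu
  refine (lt_min hc (by positivity : (0 : ℝ) < K * δ)).trans_le (le_ciInf fun y => ?_)
  by_cases hy : dist y x < δ
  · have := hball y hy
    have : (0 : ℝ) ≤ K * dist x y := by positivity
    linarith [min_le_left c (K * δ)]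
  · have : (K : ℝ) * δ ≤ K * dist x y := by
      rw [dist_comm]; exact mul_le_mul_of_nonneg_left (not_lt.1 hy) K.coe_nonneg
    linarith [min_le_right c (K * δ), hu y]

theorem exists_lipschitzWith_forall_lt_imp {U : Set X} {P : X → ℝ → Prop}
    (hP₀ : ∀ x, P x 0) (hP : ∀ x s t, s ≤ t → P x t → P x s)
    (hU : ∀ x ∈ U, ∃ c > 0, ∀ᶠ y in 𝓝 x, P y c) (hK : 0 < K) :
    ∃ ξ : X → ℝ, LipschitzWith K ξ ∧ (∀ x, 0 ≤ ξ x) ∧ (∀ x ∈ U, 0 < ξ x) ∧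
      ∀ x, ∀ s < ξ x, P x s := by
  set S : X → Set ℝ := fun x => {t | t ≤ 1 ∧ P x t}
  have hS₀ : ∀ x, (0 : ℝ) ∈ S x := fun x => ⟨zero_le_one, hP₀ x⟩
  have hSbdd : ∀ x, BddAbove (S x) := fun x => ⟨1, fun t ht => ht.1⟩
  set u : X → ℝ := fun x => sSup (S x)
  have hu : ∀ x, 0 ≤ u x := fun x => le_csSup (hSbdd x) (hS₀ x)
  refine ⟨lipschitzEnvelope K u, lipschitzWith_lipschitzEnvelope hu,
    lipschitzEnvelope_nonneg hu, fun x hx => ?_, fun x s hs => ?_⟩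
  · obtain ⟨c, hc, hPc⟩ := hU x hx
    refine lipschitzEnvelope_pos hK hu (lt_min hc one_pos) (hPc.mono fun y hy => ?_)
    exact le_csSup (hSbdd y) ⟨min_le_right _ _, hP y _ _ (min_le_left _ _) hy⟩
  · obtain ⟨t, ⟨-, ht⟩, hst⟩ :=
      exists_lt_of_lt_csSup ⟨0, hS₀ x⟩ (hs.trans_le (lipschitzEnvelope_le hu x))
    exact hP x s t hst.le ht

end LipschitzEnvelope

lemma ContinuousOn.exists_pos_eventually_forall_ball {X Y : Type*} [PseudoMetricSpace X]
    [PseudoMetricSpace Y] {f : X → Y} {U : Set X} (hf : ContinuousOn f U) (hU : IsOpen U)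
    {x : X} (hx : x ∈ U) {ε : ℝ} (hε : 0 < ε) :
    ∃ δ > 0, ∀ᶠ y in 𝓝 x, ∀ z ∈ ball y δ, z ∈ U ∧ dist (f z) (f y) < ε := by
  have hnhds : U ∩ f ⁻¹' ball (f x) (ε / 2) ∈ 𝓝 x :=
    inter_mem (hU.mem_nhds hx)
      ((hf.continuousAt (hU.mem_nhds hx)).preimage_mem_nhds (ball_mem_nhds _ (half_pos hε)))
  obtain ⟨δ, hδ, hsub⟩ := Metric.mem_nhds_iff.1 hnhds
  refine ⟨δ / 2, half_pos hδ, ?_⟩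
  filter_upwards [ball_mem_nhds x (half_pos hδ)] with y hy z hz
  have hz : z ∈ U ∩ f ⁻¹' ball (f x) (ε / 2) :=
    hsub (ball_subset_ball' (by rw [mem_ball] at hy; linarith) hz)
  have hy : y ∈ U ∩ f ⁻¹' ball (f x) (ε / 2) := hsub (ball_subset_ball (by linarith) hy)
  refine ⟨hz.1, (dist_triangle_right _ _ (f x)).trans_lt ?_⟩
  linarith [mem_ball.1 hz.2, mem_ball.1 hy.2]

section Gradient

variable {F : Type*} [NormedAddCommGroup F] [InnerProductSpace ℝ F] [CompleteSpace F]

theorem abs_sub_sub_inner_gradient_le {f : F → ℝ} {x y : F} {r ε : ℝ}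
    (hf : ∀ z ∈ closedBall x r, DifferentiableAt ℝ f z)
    (hf' : ∀ z ∈ closedBall x r, ‖gradient f z - gradient f x‖ ≤ ε) (hy : ‖y‖ ≤ r) :
    |f (x + y) - f x - ⟪gradient f x, y⟫| ≤ ε * ‖y‖ := by
  have key := (convex_closedBall x r).norm_image_sub_le_of_norm_fderiv_le'
    (φ := InnerProductSpace.toDual ℝ F (gradient f x)) hf
    (fun z hz => by
      rw [← toDual_gradient, ← map_sub, LinearIsometryEquiv.norm_map]; exact hf' z hz)
    (mem_closedBall_self ((norm_nonneg y).trans hy))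
    (by rwa [mem_closedBall, dist_eq_norm, add_sub_cancel_left])
  simpa only [add_sub_cancel_left, InnerProductSpace.toDual_apply_apply, Real.norm_eq_abs]
    using key

def IsAdmissibleScale (H : Set F) (g ω : F → ℝ) (η : ℝ) (x : F) (s : ℝ) : Prop :=
  32 * s ≤ η * ω x ∧ ∀ z ∈ ball x (32 * s / η), z ∈ H ∧ ‖gradient g z - gradient g x‖ ≤ η / 4

variable {H : Set F} {g ω : F → ℝ} {η : ℝ}

lemma isAdmissibleScale_zero {x : F} (hωx : 0 ≤ ω x) (hη : 0 ≤ η) :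
    IsAdmissibleScale H g ω η x 0 :=
  ⟨by rw [mul_zero]; exact mul_nonneg hη hωx, fun z hz => by simp at hz⟩

lemma IsAdmissibleScale.mono (hη : 0 < η) {x : F} {s t : ℝ} (hst : s ≤ t)
    (ht : IsAdmissibleScale H g ω η x t) : IsAdmissibleScale H g ω η x s :=
  ⟨by linarith [ht.1], fun z hz => ht.2 z (ball_subset_ball (by gcongr) hz)⟩

lemma exists_pos_eventually_isAdmissibleScale (hH : IsOpen H)
    (hg : ContinuousOn (gradient g) H) (hω : Continuous ω) (hη : 0 < η) {x : F} (hx : x ∈ H)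
    (hωx : 0 < ω x) : ∃ c > 0, ∀ᶠ y in 𝓝 x, IsAdmissibleScale H g ω η y c := by
  obtain ⟨δ, hδ, hball⟩ := hg.exists_pos_eventually_forall_ball hH hx (ε := η / 4) (by positivity)
  have hωnear : ∀ᶠ y in 𝓝 x, ω x / 2 < ω y :=
    continuousAt_const.eventually_lt hω.continuousAt (half_lt_self hωx)
  refine ⟨min (η * δ / 32) (η * ω x / 64), by positivity, ?_⟩
  filter_upwards [hball, hωnear] with y hy hωy
  have hδ' : 32 * min (η * δ / 32) (η * ω x / 64) / η ≤ δ := by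
    rw [div_le_iff₀ hη]; linarith [min_le_left (η * δ / 32) (η * ω x / 64)]
  refine ⟨?_, fun z hz => ?_⟩
  · nlinarith [min_le_right (η * δ / 32) (η * ω x / 64)]
  · obtain ⟨hzH, hzg⟩ := hy z (ball_subset_ball hδ' hz)
    exact ⟨hzH, by rw [← dist_eq_norm]; exact hzg.le⟩

end Gradient

lemma abs_sub_sub_le_of_abs_sub_le {E : Type*} [SeminormedAddCommGroup E] {h g ξ : E → ℝ}
    {L : ℝ≥0} (hξ : LipschitzWith L ξ) (hh : ∀ y, |h y - g y| ≤ 2 * ξ y) {x y : E}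
    {ℓ ε r : ℝ} (hg : |g (x + y) - g x - ℓ| ≤ ε * r) (hy : ‖y‖ ≤ r) :
    |h (x + y) - h x - ℓ| ≤ 4 * ξ x + (2 * L + ε) * r := by
  have hξy : ξ (x + y) ≤ ξ x + L * r := by
    have := hξ.dist_le_mul (x + y) x
    rw [Real.dist_eq, dist_eq_norm, add_sub_cancel_left] at this
    linarith [le_abs_self (ξ (x + y) - ξ x), mul_le_mul_of_nonneg_left hy L.coe_nonneg]
  calc |h (x + y) - h x - ℓ|
      = |(h (x + y) - g (x + y)) - (h x - g x) + (g (x + y) - g x - ℓ)| := by ring_nf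
    _ ≤ |h (x + y) - g (x + y)| + |h x - g x| + |g (x + y) - g x - ℓ| :=
      (abs_add_le _ _).trans (add_le_add (abs_sub _ _) le_rfl)
    _ ≤ 4 * ξ x + (2 * L + ε) * r := by linarith [hh (x + y), hh x]

theorem statement10 (n : ℕ) (H : Set (En n)) (hH : IsOpen H)
    (g : En n → ℝ) (hg : C1On g H)
    (ω : En n → ℝ) (hωc : Continuous ω) (hω0 : ∀ x, 0 ≤ ω x) (hωH : ∀ x ∈ H, 0 < ω x)
    (η : ℝ) (hη : η ∈ Set.Ioc (0:ℝ) 1) :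
    ∃ ξ : En n → ℝ, Continuous ξ ∧ (∀ x, 0 ≤ ξ x) ∧ (∀ x ∈ H, 0 < ξ x) ∧
      (∀ x, ξ x ≤ ω x / 2) ∧
      ∀ x ∈ H, ∀ h : En n → ℝ, (∀ y, |h y - g y| ≤ 2 * ξ y) →
        ∃ r : ℝ, 0 < r ∧ r < ω x ∧ ∀ y : En n, ‖y‖ ≤ r →
          |h (x + y) - h x - (inner ℝ (gradient g x) y : ℝ)| ≤ η * r := by
  obtain ⟨hη₀, hη₁⟩ := hη
  obtain ⟨ξ, hξ, hξ₀, hξH, hξP⟩ := exists_lipschitzWith_forall_lt_imp (K := (η / 8).toNNReal)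
    (fun x => isAdmissibleScale_zero (hω0 x) hη₀.le) (fun x s t => IsAdmissibleScale.mono hη₀)
    (fun x hx => exists_pos_eventually_isAdmissibleScale hH hg.2 hωc hη₀ hx (hωH x hx))
    (by positivity)
  refine ⟨ξ, hξ.continuous, hξ₀, hξH, fun x => ?_, fun x hx h hh => ?_⟩
  · refine le_of_forall_lt_imp_le_of_dense fun s hs => ?_
    nlinarith [(hξP x s hs).1, hω0 x]
  have hξx := hξH x hx
  obtain ⟨hξω, hball⟩ := hξP x (ξ x / 2) (half_lt_self hξx)
  have hclosed : closedBall x (8 * ξ x / η) ⊆ ball x (32 * (ξ x / 2) / η) :=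
    closedBall_subset_ball (by rw [div_lt_div_iff_of_pos_right hη₀]; linarith)
  refine ⟨8 * ξ x / η, by positivity, ?_, fun y hy => ?_⟩
  · rw [div_lt_iff₀ hη₀]; nlinarith [hωH x hx]
  have hgx := abs_sub_sub_inner_gradient_le (fun z hz => hg.1 z (hball z (hclosed hz)).1)
    (fun z hz => (hball z (hclosed hz)).2) hy
  refine (abs_sub_sub_le_of_abs_sub_le hξ hh (hgx.trans (by gcongr)) hy).trans_eq ?_
  rw [Real.coe_toNNReal _ (by positivity)]
  field_simp
  ring
end
end

section
/- For every function f : ℝⁿ → ℝ, the set of points at which f is not (Fréchet) differentiable is a G_{δσ} set, i.e., it is a countable union of sets each of which is a countable intersection of open subsets of ℝⁿ. -/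
open MeasureTheory Metric Set Filter
open scoped RealInnerProductSpace ENNReal NNReal Topology

noncomputable section

/-!
Write `S k m` for the set of points `u` at which some linear map `L` satisfies
`‖f (u + y) - f u - L y‖ ≤ ‖y‖ / (k + 1)` whenever `‖y‖ < 1 / (m + 1)`. Then `f` is differentiable
at `x` iff `x ∈ ⋂ k, ⋃ m, S k m`, the limit of the approximating maps being the derivative. At a
point of continuity of `f` the approximating maps at nearby points are uniformly bounded, so by
compactness of bounded sets of linear maps `closure (S k m)` and `S k m` contain the same points of
continuity. Hence the non-differentiability set is the union of the discontinuity set, which is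
`F_σ` and so `G_{δσ}`, with the `G_{δσ}` set `⋃ k, ⋂ m, (closure (S k m))ᶜ`.
-/

section ApproxLinear

variable {E F : Type*} [NormedAddCommGroup E] [NormedSpace ℝ E] [NormedAddCommGroup F]
  [NormedSpace ℝ F] {f : E → F} {L L' : E →L[ℝ] F} {x : E} {ε ε' δ r r' : ℝ}

def IsApproxLinearAt (f : E → F) (L : E →L[ℝ] F) (ε r : ℝ) (x : E) : Prop :=
  ∀ y, ‖y‖ < r → ‖f (x + y) - f x - L y‖ ≤ ε * ‖y‖

namespace IsApproxLinearAt

lemma mono (h : IsApproxLinearAt f L ε r x) (hε : ε ≤ ε') (hr : r' ≤ r) :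
    IsApproxLinearAt f L ε' r' x := fun y hy =>
  (h y (hy.trans_le hr)).trans (mul_le_mul_of_nonneg_right hε (norm_nonneg y))

lemma of_norm_sub_le (h : IsApproxLinearAt f L ε r x) (hL : ‖L - L'‖ ≤ δ) :
    IsApproxLinearAt f L' (ε + δ) r x := fun y hy =>
  calc ‖f (x + y) - f x - L' y‖ = ‖(f (x + y) - f x - L y) + (L - L') y‖ := by
        rw [sub_apply]; abel_nf
    _ ≤ ε * ‖y‖ + δ * ‖y‖ :=
        norm_add_le_of_le (h y hy) ((L - L').le_of_opNorm_le hL y)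
    _ = (ε + δ) * ‖y‖ := by ring

lemma norm_sub_le (h : IsApproxLinearAt f L ε r x) (h' : IsApproxLinearAt f L' ε' r' x)
    (hε : 0 ≤ ε) (hε' : 0 ≤ ε') (hr : 0 < r) (hr' : 0 < r') : ‖L - L'‖ ≤ ε + ε' := by
  refine ContinuousLinearMap.opNorm_le_of_ball (lt_min hr hr') (by positivity) fun y hy => ?_
  rw [mem_ball_zero_iff, lt_min_iff] at hy
  calc ‖(L - L') y‖ = ‖(f (x + y) - f x - L' y) - (f (x + y) - f x - L y)‖ := by
        rw [sub_apply]; abel_nf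
    _ ≤ ε' * ‖y‖ + ε * ‖y‖ := norm_sub_le_of_le (h' y hy.2) (h y hy.1)
    _ = (ε + ε') * ‖y‖ := by ring

lemma opNorm_le (h : IsApproxLinearAt f L ε r x) (hε : 0 ≤ ε) (hr : 0 < r) {C : ℝ} (hC : 0 ≤ C)
    (hfC : ∀ y, ‖y‖ < r → ‖f (x + y) - f x‖ ≤ C) : ‖L‖ ≤ 2 * C / r + ε := by
  refine L.opNorm_le_of_shell hr (by positivity) (c := (2 : ℝ)) (by norm_num) fun y hy₁ hy₂ => ?_
  rw [Real.norm_two] at hy₁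
  have hC_le : C ≤ 2 * C / r * ‖y‖ := by
    rw [div_mul_eq_mul_div, le_div_iff₀ hr]; nlinarith
  calc ‖L y‖ = ‖(f (x + y) - f x) - (f (x + y) - f x - L y)‖ := by abel_nf
    _ ≤ C + ε * ‖y‖ := norm_sub_le_of_le (hfC y hy₂) (h y hy₂)
    _ ≤ (2 * C / r + ε) * ‖y‖ := by rw [add_mul]; gcongr

lemma of_tendsto {ι : Type*} {l : Filter ι} [l.NeBot] {u : ι → E} {Λ : ι → E →L[ℝ] F}
    (hf : ContinuousAt f x) (hu : Tendsto u l (𝓝 x)) (hΛ : Tendsto Λ l (𝓝 L))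
    (h : ∀ᶠ i in l, IsApproxLinearAt f (Λ i) ε r (u i)) : IsApproxLinearAt f L ε r x := by
  intro y hy
  have hz : Tendsto (fun i => x + y - u i) l (𝓝 y) := by
    simpa using (tendsto_const_nhds (x := x + y)).sub hu
  have hΛz : Tendsto (fun i => Λ i (x + y - u i)) l (𝓝 (L y)) :=
    (isBoundedBilinearMap_apply.continuous.tendsto (L, y)).comp (hΛ.prodMk_nhds hz)
  refine le_of_tendsto_of_tendsto
    (((tendsto_const_nhds.sub (hf.tendsto.comp hu)).sub hΛz).norm) (hz.norm.const_mul ε) ?_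
  filter_upwards [h, hz.norm.eventually_lt_const hy] with i hi hzi
  simpa using hi _ hzi

end IsApproxLinearAt

theorem hasFDerivAt_iff_forall_isApproxLinearAt :
    HasFDerivAt f L x ↔ ∀ ε > 0, ∃ r > 0, IsApproxLinearAt f L ε r x := by
  simp only [hasFDerivAt_iff_isLittleO_nhds_zero, Asymptotics.isLittleO_iff,
    Metric.eventually_nhds_iff_ball, mem_ball_zero_iff, IsApproxLinearAt]

theorem differentiableAt_iff_forall_exists_isApproxLinearAt [CompleteSpace F] :
    DifferentiableAt ℝ f x ↔ ∀ ε > 0, ∃ L, ∃ r > 0, IsApproxLinearAt f L ε r x := by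
  refine ⟨fun h ε hε => ⟨_, hasFDerivAt_iff_forall_isApproxLinearAt.1 h.hasFDerivAt ε hε⟩,
    fun h => ?_⟩
  choose L r hr hL using h
  set Λ : ℕ → E →L[ℝ] F := fun k => L (1 / (k + 1)) Nat.one_div_pos_of_nat
  have hΛ : ∀ k l : ℕ, ‖Λ k - Λ l‖ ≤ 1 / (k + 1) + 1 / (l + 1) := fun k l =>
    (hL _ _).norm_sub_le (hL _ _) (by positivity) (by positivity) (hr _ _) (hr _ _)
  have hlim : Tendsto (fun k : ℕ => 1 / ((k : ℝ) + 1)) atTop (𝓝 0) :=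
    tendsto_one_div_add_atTop_nhds_zero_nat
  have hcauchy : CauchySeq Λ := by
    refine cauchySeq_of_le_tendsto_0' (fun k => 2 * (1 / ((k : ℝ) + 1)))
      (fun k l hkl => ?_) (by simpa using hlim.const_mul 2)
    rw [dist_eq_norm]
    refine (hΛ k l).trans ?_
    have : (1 : ℝ) / (l + 1) ≤ 1 / (k + 1) := Nat.one_div_le_one_div hkl
    linarith
  obtain ⟨L₀, hL₀⟩ := cauchySeq_tendsto_of_complete hcauchy
  have hΛL₀ : ∀ k : ℕ, ‖Λ k - L₀‖ ≤ 1 / (k + 1) := fun k => by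
    simpa using le_of_tendsto_of_tendsto (tendsto_const_nhds.sub hL₀).norm
      (tendsto_const_nhds.add hlim) (Eventually.of_forall (hΛ k))
  refine ⟨L₀, hasFDerivAt_iff_forall_isApproxLinearAt.2 fun ε hε => ?_⟩
  obtain ⟨k, hk⟩ := exists_nat_one_div_lt (half_pos hε)
  exact ⟨_, hr _ _, ((hL _ _).of_norm_sub_le (hΛL₀ k)).mono (by linarith) le_rfl⟩

theorem differentiableAt_iff_forall_nat_exists_nat [CompleteSpace F] :
    DifferentiableAt ℝ f x ↔
      ∀ k : ℕ, ∃ m : ℕ, ∃ L, IsApproxLinearAt f L (1 / (k + 1)) (1 / (m + 1)) x := by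
  rw [differentiableAt_iff_forall_exists_isApproxLinearAt]
  constructor
  · intro h k
    obtain ⟨L, r, hr, hL⟩ := h _ Nat.one_div_pos_of_nat
    obtain ⟨m, hm⟩ := exists_nat_one_div_lt hr
    exact ⟨m, L, hL.mono le_rfl hm.le⟩
  · intro h ε hε
    obtain ⟨k, hk⟩ := exists_nat_one_div_lt hε
    obtain ⟨m, L, hL⟩ := h k
    exact ⟨L, _, Nat.one_div_pos_of_nat, hL.mono hk.le le_rfl⟩

theorem exists_isApproxLinearAt_of_mem_closure [FiniteDimensional ℝ E] [FiniteDimensional ℝ F]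
    (hf : ContinuousAt f x) (hε : 0 ≤ ε) (hr : 0 < r)
    (hx : x ∈ closure {u | ∃ L, IsApproxLinearAt f L ε r u}) :
    ∃ L, IsApproxLinearAt f L ε r x := by
  obtain ⟨δ, hδ, hfδ⟩ := Metric.continuousAt_iff.1 hf 1 one_pos
  obtain ⟨u, hu_mem, hu⟩ := mem_closure_iff_seq_limit.1 hx
  choose Λ hΛ using hu_mem
  set ρ := min r (δ / 2)
  have hρ : 0 < ρ := lt_min hr (half_pos hδ)
  have hbounded : ∀ᶠ j in atTop, Λ j ∈ closedBall 0 (2 * 2 / ρ + ε) := by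
    filter_upwards [hu.eventually (ball_mem_nhds x (half_pos hδ))] with j hj
    rw [mem_closedBall_zero_iff]
    refine ((hΛ j).mono le_rfl (min_le_left _ _)).opNorm_le hε hρ zero_le_two fun y hy => ?_
    have hy' : dist (u j + y) x < δ := calc
      dist (u j + y) x ≤ ‖y‖ + dist (u j) x := by
        rw [dist_eq_norm, dist_eq_norm, add_sub_right_comm, add_comm]; exact norm_add_le _ _
      _ < δ / 2 + δ / 2 := add_lt_add (hy.trans_le (min_le_right _ _)) (mem_ball.1 hj)
      _ = δ := add_halves δ
    have hx' : dist (u j) x < δ := (mem_ball.1 hj).trans (half_lt_self hδ)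
    calc ‖f (u j + y) - f (u j)‖ = dist (f (u j + y)) (f (u j)) := (dist_eq_norm _ _).symm
      _ ≤ dist (f (u j + y)) (f x) + dist (f (u j)) (f x) := dist_triangle_right _ _ _
      _ ≤ 1 + 1 := add_le_add (hfδ hy').le (hfδ hx').le
      _ = 2 := one_add_one_eq_two
  obtain ⟨L, -, φ, hφ, hΛφ⟩ :=
    tendsto_subseq_of_frequently_bounded isBounded_closedBall hbounded.frequently
  exact ⟨L, .of_tendsto hf (hu.comp hφ.tendsto_atTop) hΛφ (.of_forall fun j => hΛ (φ j))⟩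

theorem setOf_not_differentiableAt_eq [FiniteDimensional ℝ E] [FiniteDimensional ℝ F]
    (f : E → F) :
    {x | ¬ DifferentiableAt ℝ f x} = {x | ContinuousAt f x}ᶜ ∪ ⋃ k : ℕ, ⋂ m : ℕ,
      (closure {u | ∃ L, IsApproxLinearAt f L (1 / (k + 1)) (1 / (m + 1)) u})ᶜ := by
  ext x
  simp only [mem_ofPred_eq, mem_union, mem_compl_iff, mem_iUnion, mem_iInter]
  constructor
  · intro hnd
    by_cases hc : ContinuousAt f x
    · rw [differentiableAt_iff_forall_nat_exists_nat] at hnd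
      push Not at hnd
      obtain ⟨k, hk⟩ := hnd
      refine .inr ⟨k, fun m hm => ?_⟩
      obtain ⟨L, hL⟩ := exists_isApproxLinearAt_of_mem_closure hc (by positivity)
        Nat.one_div_pos_of_nat hm
      exact hk m L hL
    · exact .inl hc
  · rintro (hc | ⟨k, hk⟩) hd
    · exact hc hd.continuousAt
    · obtain ⟨m, hm⟩ := differentiableAt_iff_forall_nat_exists_nat.1 hd k
      exact hk m (subset_closure hm)

end ApproxLinear

theorem exists_isOpen_compl_union_iUnion_eq {X : Type*} [TopologicalSpace X]
    [PerfectlyNormalSpace X] {s : Set X} {t : ℕ → Set X} (hs : IsGδ s) (ht : ∀ k, IsGδ (t k)) :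
    ∃ G : ℕ → ℕ → Set X, (∀ i j, IsOpen (G i j)) ∧ sᶜ ∪ ⋃ k, t k = ⋃ i, ⋂ j, G i j := by
  obtain ⟨V, hV, rfl⟩ := hs.eq_iInter_nat
  choose G hG hGeq using fun k => ((hV k).isClosed_compl.isGδ.union (ht k)).eq_iInter_nat
  refine ⟨G, hG, ?_⟩
  simp only [← hGeq, compl_iInter, iUnion_union_distrib]

theorem statement19 (n : ℕ) (f : En n → ℝ) :
    ∃ G : ℕ → ℕ → Set (En n), (∀ i j, IsOpen (G i j)) ∧
      {x | ¬ DifferentiableAt ℝ f x} = ⋃ i, ⋂ j, G i j := by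
  rw [setOf_not_differentiableAt_eq]
  exact exists_isOpen_compl_union_iUnion_eq (.setOfPred_continuousAt f)
    fun k => .iInter_of_isOpen fun m => isClosed_closure.isOpen_compl

end
end
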